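/- arXiv:math-ph/0301001 — 5 statements merged into one kernel-verified Lean document; each statement's English description precedes it below -/
import Mathlib

section
/- Let α be an invertible 2×2 block matrix with blocks A, B, C, D (each 2n×2n) and inverse with blocks A', B', C', D'. Let M be a 2n×2n matrix with det(CM + D) ≠ 0 and set N = (AM + B)(CM + D)⁻¹. Then det(C'N + D') ≠ 0 and M = (A'N + B')(C'N + D')⁻¹; i.e., the fractional linear transformations σ_α and σ_{α⁻¹} are mutually inverse on their domain. -/
open Matrix

theorem stmt_6 (n : ℕ)
    (A B C D A' B' C' D' : Matrix (Fin (2*n)) (Fin (2*n)) ℝ)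
    (h1 : Matrix.fromBlocks A B C D * Matrix.fromBlocks A' B' C' D' = 1)
    (h2 : Matrix.fromBlocks A' B' C' D' * Matrix.fromBlocks A B C D = 1)
    (M : Matrix (Fin (2*n)) (Fin (2*n)) ℝ)
    (hM : (C * M + D).det ≠ 0)
    (N : Matrix (Fin (2*n)) (Fin (2*n)) ℝ)
    (hN : N = (A * M + B) * (C * M + D)⁻¹) :
    (C' * N + D').det ≠ 0 ∧ M = (A' * N + B') * (C' * N + D')⁻¹ := by
  rw [Matrix.fromBlocks_multiply, ← Matrix.fromBlocks_one] at h2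
  have e1 : A' * A + B' * C = 1 := (Matrix.fromBlocks_inj.mp h2).1
  have e2 : A' * B + B' * D = 0 := (Matrix.fromBlocks_inj.mp h2).2.1
  have e3 : C' * A + D' * C = 0 := (Matrix.fromBlocks_inj.mp h2).2.2.1
  have e4 : C' * B + D' * D = 1 := (Matrix.fromBlocks_inj.mp h2).2.2.2
  have hU : IsUnit (C * M + D).det := isUnit_iff_ne_zero.mpr hM
  have hinv : (C * M + D) * (C * M + D)⁻¹ = 1 := Matrix.mul_nonsing_inv _ hU
  have key : C' * N + D' = (C * M + D)⁻¹ := by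
    have h3 : C' * (A * M + B) + D' * (C * M + D)
        = (C' * A + D' * C) * M + (C' * B + D' * D) := by noncomm_ring
    rw [e3, e4, zero_mul, zero_add] at h3
    calc C' * N + D'
        = (C' * (A * M + B) + D' * (C * M + D)) * (C * M + D)⁻¹ := by
          rw [add_mul, mul_assoc, mul_assoc, hinv, mul_one, hN]
      _ = (C * M + D)⁻¹ := by rw [h3, one_mul]
  have key2 : A' * N + B' = M * (C * M + D)⁻¹ := by
    have h3 : A' * (A * M + B) + B' * (C * M + D)
        = (A' * A + B' * C) * M + (A' * B + B' * D) := by noncomm_ring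
    rw [e1, e2, one_mul, add_zero] at h3
    calc A' * N + B'
        = (A' * (A * M + B) + B' * (C * M + D)) * (C * M + D)⁻¹ := by
          rw [add_mul, mul_assoc, mul_assoc, hinv, mul_one, hN]
      _ = M * (C * M + D)⁻¹ := by rw [h3]
  constructor
  · rw [key, Matrix.det_nonsing_inv, Ring.inverse_eq_inv']
    exact inv_ne_zero hM
  · rw [key, key2, Matrix.nonsing_inv_nonsing_inv _ hU, mul_assoc,
      Matrix.nonsing_inv_mul _ hU, mul_one]
end

section
/- Let α = [[A,B],[C,D]] be a 4n×4n invertible matrix with inverse α⁻¹ = [[A',B'],[C',D']], let M be 2n×2n with |CM + D| ≠ 0 and N = (AM+B)(CM+D)⁻¹. Then the four conditions |CM+D| ≠ 0, |MC' − A'| ≠ 0, |C'N + D'| ≠ 0, and |NC − A| ≠ 0 are mutually equivalent. -/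
open Matrix

theorem stmt_7 (n : ℕ)
    (A B C D A' B' C' D' : Matrix (Fin (2*n)) (Fin (2*n)) ℝ)
    (h1 : Matrix.fromBlocks A B C D * Matrix.fromBlocks A' B' C' D' = 1)
    (h2 : Matrix.fromBlocks A' B' C' D' * Matrix.fromBlocks A B C D = 1)
    (M : Matrix (Fin (2*n)) (Fin (2*n)) ℝ)
    (hM : (C * M + D).det ≠ 0)
    (N : Matrix (Fin (2*n)) (Fin (2*n)) ℝ)
    (hN : N = (A * M + B) * (C * M + D)⁻¹) :
    ((C * M + D).det ≠ 0 ↔ (M * C' - A').det ≠ 0) ∧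
    ((M * C' - A').det ≠ 0 ↔ (C' * N + D').det ≠ 0) ∧
    ((C' * N + D').det ≠ 0 ↔ (N * C - A).det ≠ 0) := by
  have hdet : IsUnit (C * M + D).det := isUnit_iff_ne_zero.mpr hM
  have hNM : N * (C * M + D) = A * M + B := by
    rw [hN, Matrix.mul_assoc, Matrix.nonsing_inv_mul _ hdet, Matrix.mul_one]
  rw [Matrix.fromBlocks_multiply, ← Matrix.fromBlocks_one] at h1 h2
  have e11 : A * A' + B * C' = 1 := by
    have := congrArg Matrix.toBlocks₁₁ h1; simpa only [Matrix.toBlocks_fromBlocks₁₁, Matrix.toBlocks_fromBlocks₂₁, Matrix.toBlocks_fromBlocks₂₂] using this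
  have e21 : C * A' + D * C' = 0 := by
    have := congrArg Matrix.toBlocks₂₁ h1; simpa only [Matrix.toBlocks_fromBlocks₁₁, Matrix.toBlocks_fromBlocks₂₁, Matrix.toBlocks_fromBlocks₂₂] using this
  have f21 : C' * A + D' * C = 0 := by
    have := congrArg Matrix.toBlocks₂₁ h2; simpa only [Matrix.toBlocks_fromBlocks₁₁, Matrix.toBlocks_fromBlocks₂₁, Matrix.toBlocks_fromBlocks₂₂] using this
  have f22 : C' * B + D' * D = 1 := by
    have := congrArg Matrix.toBlocks₂₂ h2; simpa only [Matrix.toBlocks_fromBlocks₁₁, Matrix.toBlocks_fromBlocks₂₁, Matrix.toBlocks_fromBlocks₂₂] using this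
  have k1 : (C' * N + D') * (C * M + D) = 1 := by
    calc (C' * N + D') * (C * M + D)
        = C' * (N * (C * M + D)) + D' * (C * M + D) := by noncomm_ring
      _ = C' * (A * M + B) + D' * (C * M + D) := by rw [hNM]
      _ = (C' * A + D' * C) * M + (C' * B + D' * D) := by noncomm_ring
      _ = 1 := by rw [f21, f22]; simp
  have k2 : (N * C - A) * (M * C' - A') = 1 := by
    calc (N * C - A) * (M * C' - A')
        = (N * (C * M + D)) * C' - N * (C * A' + D * C') - A * M * C' + A * A' := by
          noncomm_ring
      _ = (A * M + B) * C' - N * (C * A' + D * C') - A * M * C' + A * A' := by rw [hNM]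
      _ = (A * A' + B * C') - N * (C * A' + D * C') := by noncomm_ring
      _ = 1 := by rw [e11, e21]; simp
  have d1 : (C' * N + D').det * (C * M + D).det = 1 := by
    rw [← Matrix.det_mul, k1, Matrix.det_one]
  have d2 : (N * C - A).det * (M * C' - A').det = 1 := by
    rw [← Matrix.det_mul, k2, Matrix.det_one]
  have hCN : (C' * N + D').det ≠ 0 := left_ne_zero_of_mul_eq_one d1
  have hNC : (N * C - A).det ≠ 0 := left_ne_zero_of_mul_eq_one d2
  have hMC : (M * C' - A').det ≠ 0 := right_ne_zero_of_mul_eq_one d2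
  exact ⟨iff_of_true hM hMC, iff_of_true hMC hCN, iff_of_true hCN hNC⟩
end

section
/- Let α = [[A,B],[C,D]] be a 4n×4n matrix satisfying αᵀ J_{4n} α = diag(K₁, −K₂) where J_{4n} = [[0, I_{2n}],[−I_{2n}, 0]] and K₁, K₂ are antisymmetric 2n×2n matrices. If M is a 2n×2n matrix with Mᵀ K₁ M = K₂ and det(CM + D) ≠ 0, then N = (AM + B)(CM + D)⁻¹ is symmetric. -/
open Matrix

theorem stmt_8 (n : ℕ)
    (A B C D K₁ K₂ M : Matrix (Fin (2*n)) (Fin (2*n)) ℝ)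
    (hK₁ : K₁ᵀ = -K₁) (hK₂ : K₂ᵀ = -K₂)
    (hα : (Matrix.fromBlocks A B C D)ᵀ *
        Matrix.fromBlocks (0 : Matrix (Fin (2*n)) (Fin (2*n)) ℝ) 1 (-1) 0 *
        Matrix.fromBlocks A B C D = Matrix.fromBlocks K₁ 0 0 (-K₂))
    (hM : Mᵀ * K₁ * M = K₂)
    (hdet : (C * M + D).det ≠ 0) :
    ((A * M + B) * (C * M + D)⁻¹)ᵀ = (A * M + B) * (C * M + D)⁻¹ := by
  simp only [Matrix.fromBlocks_transpose, Matrix.fromBlocks_multiply, Matrix.mul_zero,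
    Matrix.zero_mul, Matrix.mul_one, Matrix.one_mul, Matrix.mul_neg, Matrix.neg_mul,
    add_zero, zero_add, neg_neg] at hα
  rw [Matrix.fromBlocks_inj] at hα
  obtain ⟨h1, h2, h3, h4⟩ := hα
  set P := A * M + B with hP
  set Q := C * M + D with hQ
  have key : Pᵀ * Q = Qᵀ * P := by
    have : Pᵀ * Q - Qᵀ * P = Mᵀ * K₁ * M - K₂ := by
      rw [hP, hQ]
      have e1 : Aᵀ * C - Cᵀ * A = K₁ := by linear_combination (norm := noncomm_ring) h1
      have e2 : Aᵀ * D - Cᵀ * B = 0 := by linear_combination (norm := noncomm_ring) h2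
      have e3 : Bᵀ * C - Dᵀ * A = 0 := by linear_combination (norm := noncomm_ring) h3
      have e4 : Bᵀ * D - Dᵀ * B = -K₂ := by linear_combination (norm := noncomm_ring) h4
      simp only [Matrix.transpose_add, Matrix.transpose_mul]
      linear_combination (norm := noncomm_ring) Mᵀ * e1 * M + Mᵀ * e2 + e3 * M + e4
    rw [hM] at this
    linear_combination (norm := noncomm_ring) this
  have hQinv : Q * Q⁻¹ = 1 := Matrix.mul_nonsing_inv Q hdet.isUnit
  have hQTinv : (Qᵀ)⁻¹ * Qᵀ = 1 := by
    apply Matrix.nonsing_inv_mul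
    rw [Matrix.det_transpose]; exact hdet.isUnit
  calc (P * Q⁻¹)ᵀ = (Q⁻¹)ᵀ * Pᵀ := by rw [Matrix.transpose_mul]
    _ = (Qᵀ)⁻¹ * Pᵀ := by rw [Matrix.transpose_nonsing_inv]
    _ = (Qᵀ)⁻¹ * (Pᵀ * Q) * Q⁻¹ := by
        rw [Matrix.mul_assoc, Matrix.mul_assoc, hQinv, Matrix.mul_one]
    _ = (Qᵀ)⁻¹ * (Qᵀ * P) * Q⁻¹ := by rw [key]
    _ = P * Q⁻¹ := by rw [← Matrix.mul_assoc, hQTinv, Matrix.one_mul]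
end

section
/- Conversely, with α as above satisfying αᵀ J_{4n} α = diag(K₁,−K₂) with K₁, K₂ antisymmetric and invertible, and α invertible with inverse blocks A',B',C',D': if N is a symmetric 2n×2n matrix with det(C'N + D') ≠ 0, then M = (A'N + B')(C'N + D')⁻¹ satisfies Mᵀ K₁ M = K₂. -/
open Matrix

theorem stmt_9 (n : ℕ)
    (A B C D A' B' C' D' K₁ K₂ N : Matrix (Fin (2*n)) (Fin (2*n)) ℝ)
    (hK₁ : K₁ᵀ = -K₁) (hK₂ : K₂ᵀ = -K₂)
    (hK₁inv : IsUnit K₁.det) (hK₂inv : IsUnit K₂.det)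
    (hα : (Matrix.fromBlocks A B C D)ᵀ *
        Matrix.fromBlocks (0 : Matrix (Fin (2*n)) (Fin (2*n)) ℝ) 1 (-1) 0 *
        Matrix.fromBlocks A B C D = Matrix.fromBlocks K₁ 0 0 (-K₂))
    (h1 : Matrix.fromBlocks A B C D * Matrix.fromBlocks A' B' C' D' = 1)
    (h2 : Matrix.fromBlocks A' B' C' D' * Matrix.fromBlocks A B C D = 1)
    (hN : Nᵀ = N)
    (hdet : (C' * N + D').det ≠ 0)
    (M : Matrix (Fin (2*n)) (Fin (2*n)) ℝ)
    (hMdef : M = (A' * N + B') * (C' * N + D')⁻¹) :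
    Mᵀ * K₁ * M = K₂ := by
  set α := Matrix.fromBlocks A B C D with hαdef
  set β := Matrix.fromBlocks A' B' C' D' with hβdef
  have key : βᵀ * Matrix.fromBlocks K₁ 0 0 (-K₂) * β =
      Matrix.fromBlocks (0 : Matrix (Fin (2*n)) (Fin (2*n)) ℝ) 1 (-1) 0 := by
    rw [← hα]
    calc βᵀ * (αᵀ * Matrix.fromBlocks 0 1 (-1) 0 * α) * β
        = (α * β)ᵀ * Matrix.fromBlocks 0 1 (-1) 0 * (α * β) := by
          rw [transpose_mul]; noncomm_ring
      _ = Matrix.fromBlocks 0 1 (-1) 0 := by rw [h1]; simp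
  rw [hβdef, fromBlocks_transpose, fromBlocks_multiply, fromBlocks_multiply] at key
  have h11 := congrArg Matrix.toBlocks₁₁ key
  have h12 := congrArg Matrix.toBlocks₁₂ key
  have h21 := congrArg Matrix.toBlocks₂₁ key
  have h22 := congrArg Matrix.toBlocks₂₂ key
  simp only [toBlocks_fromBlocks₁₁, toBlocks_fromBlocks₁₂, toBlocks_fromBlocks₂₁,
    toBlocks_fromBlocks₂₂, Matrix.mul_zero, Matrix.zero_mul, add_zero, zero_add,
    Matrix.mul_neg, Matrix.neg_mul, ← sub_eq_add_neg] at h11 h12 h21 h22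
  -- h11 : A'ᵀ * K₁ * A' - C'ᵀ * K₂ * C' = 0
  -- h12 : A'ᵀ * K₁ * B' - C'ᵀ * K₂ * D' = 1
  -- h21 : B'ᵀ * K₁ * A' - D'ᵀ * K₂ * C' = -1
  -- h22 : B'ᵀ * K₁ * B' - D'ᵀ * K₂ * D' = 0
  have hQ : (C' * N + D') * (C' * N + D')⁻¹ = 1 :=
    Matrix.mul_nonsing_inv _ (isUnit_iff_ne_zero.mpr hdet)
  have hmain : (A' * N + B')ᵀ * K₁ * (A' * N + B') =
      (C' * N + D')ᵀ * K₂ * (C' * N + D') := by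
    have hsub : (A' * N + B')ᵀ * K₁ * (A' * N + B') -
        (C' * N + D')ᵀ * K₂ * (C' * N + D') =
        N * (A'ᵀ * K₁ * A' - C'ᵀ * K₂ * C') * N +
        N * (A'ᵀ * K₁ * B' - C'ᵀ * K₂ * D') +
        (B'ᵀ * K₁ * A' - D'ᵀ * K₂ * C') * N +
        (B'ᵀ * K₁ * B' - D'ᵀ * K₂ * D') := by
      simp only [transpose_add, transpose_mul, hN]
      noncomm_ring
    have e11 : A'ᵀ * K₁ * A' - C'ᵀ * K₂ * C' = 0 := by
      calc A'ᵀ * K₁ * A' - C'ᵀ * K₂ * C'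
          = A'ᵀ * K₁ * A' + (0 - C'ᵀ * K₂) * C' := by noncomm_ring
        _ = 0 := h11
    have e12 : A'ᵀ * K₁ * B' - C'ᵀ * K₂ * D' = 1 := by
      calc A'ᵀ * K₁ * B' - C'ᵀ * K₂ * D'
          = A'ᵀ * K₁ * B' + (0 - C'ᵀ * K₂) * D' := by noncomm_ring
        _ = 1 := h12
    have e21 : B'ᵀ * K₁ * A' - D'ᵀ * K₂ * C' = -1 := by
      calc B'ᵀ * K₁ * A' - D'ᵀ * K₂ * C'
          = B'ᵀ * K₁ * A' + (0 - D'ᵀ * K₂) * C' := by noncomm_ring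
        _ = -1 := h21
    have e22 : B'ᵀ * K₁ * B' - D'ᵀ * K₂ * D' = 0 := by
      calc B'ᵀ * K₁ * B' - D'ᵀ * K₂ * D'
          = B'ᵀ * K₁ * B' + (0 - D'ᵀ * K₂) * D' := by noncomm_ring
        _ = 0 := h22
    rw [e11, e12, e21, e22] at hsub
    simp only [Matrix.mul_zero, Matrix.zero_mul, Matrix.mul_one, Matrix.neg_mul,
      Matrix.one_mul, add_zero] at hsub
    have hz : (A' * N + B')ᵀ * K₁ * (A' * N + B') -
        (C' * N + D')ᵀ * K₂ * (C' * N + D') = 0 := by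
      rw [hsub]; abel
    exact sub_eq_zero.mp hz
  rw [hMdef]
  calc ((A' * N + B') * (C' * N + D')⁻¹)ᵀ * K₁ * ((A' * N + B') * (C' * N + D')⁻¹)
      = (C' * N + D')⁻¹ᵀ * ((A' * N + B')ᵀ * K₁ * (A' * N + B')) * (C' * N + D')⁻¹ := by
        rw [transpose_mul]; noncomm_ring
    _ = (C' * N + D')⁻¹ᵀ * ((C' * N + D')ᵀ * K₂ * (C' * N + D')) * (C' * N + D')⁻¹ := by
        rw [hmain]
    _ = ((C' * N + D') * (C' * N + D')⁻¹)ᵀ * K₂ * ((C' * N + D') * (C' * N + D')⁻¹) := by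
        rw [transpose_mul]; noncomm_ring
    _ = K₂ := by rw [hQ]; simp
end

section
/- For the linear damped oscillator system, the first-order scheme transition matrix A = (1/(4+τ²)) [[4−τ², 4τ],[−4τ e^{−ντ}, (4−τ²) e^{−ντ}]] satisfies Aᵀ K(t_{k+1}) A = K(t_k), where K(t) = [[0, −e^{νt}],[e^{νt}, 0]] and t_{k+1} = t_k + τ. -/
open Matrix

theorem stmt_14 (ν τ tk : ℝ)
    (K : ℝ → Matrix (Fin 2) (Fin 2) ℝ)
    (hK : ∀ t, K t = !![0, -Real.exp (ν*t); Real.exp (ν*t), 0])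
    (A : Matrix (Fin 2) (Fin 2) ℝ)
    (hA : A = (1/(4+τ^2)) •
      !![4-τ^2, 4*τ; -4*τ*Real.exp (-(ν*τ)), (4-τ^2)*Real.exp (-(ν*τ))]) :
    Aᵀ * K (tk+τ) * A = K tk := by
  have hpos : (4:ℝ)+τ^2 > 0 := by positivity
  have hne : (4:ℝ)+τ^2 ≠ 0 := ne_of_gt hpos
  have hE : Real.exp (ν*(tk+τ)) * Real.exp (-(ν*τ)) = Real.exp (ν*tk) := by
    rw [← Real.exp_add]; ring_nf
  subst hA
  rw [hK, hK]
  ext i j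
  fin_cases i <;> fin_cases j <;>
    simp [Matrix.mul_apply, Fin.sum_univ_two, Matrix.smul_apply, Matrix.transpose_apply,
      Matrix.vecHead, Matrix.vecTail] <;>
    (try rw [← hE]) <;> field_simp <;> ring
end
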